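/- Let Φ⁺ be the positive system of the A_{n−1} root system given by a linear order ≺ on {1,…,n} (a_{ij} ∈ Φ⁺ iff i ≺ j), let Ψ ⊆ Φ⁺ and let s_a ∈ ℝ for a ∈ Ψ. Then in the compactified apartment Λ̄, the intersection of the closures ⋂_{a∈Ψ} cl{ z ∈ Λ : a(z) ≥ s_a } equals the closure of the intersection cl( ⋂_{a∈Ψ} { z ∈ Λ : a(z) ≥ s_a } ). -/

import Mathlib

open Set Pointwise Topology Filter

namespace CompApp

variable {n : ℕ}

/-- The component `Λ_I`: the quotient of the functions `I → ℝ` by the line of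
constants (so `Λ_I = Σ_{i∈I} ℝ η_i^I` with the relation `Σ_{i∈I} η_i^I = 0`). -/
abbrev Comp (I : Finset (Fin n)) : Type :=
  (↥I → ℝ) ⧸ (Submodule.span ℝ {(1 : ↥I → ℝ)})

/-- quotient map onto a component -/
noncomputable def mkC (I : Finset (Fin n)) : (↥I → ℝ) →ₗ[ℝ] Comp I :=
  Submodule.mkQ _

/-- The apartment `Λ` itself, i.e. the component for `I = {1,…,n}`. -/
abbrev Apt (n : ℕ) : Type := Comp (Finset.univ : Finset (Fin n))

/-- restriction of functions from `{1,…,n}` to `J` -/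
def resL (J : Finset (Fin n)) :
    ((↥(Finset.univ : Finset (Fin n)) → ℝ)) →ₗ[ℝ] (↥J → ℝ) :=
  LinearMap.funLeft ℝ ℝ (fun j => ⟨j.1, Finset.mem_univ _⟩)

/-- The projection `r_J : Λ → Λ_J`, `Σ x_i η_i ↦ Σ_{i∈J} x_i η_i^J`. -/
noncomputable def resQ (J : Finset (Fin n)) : Apt n →ₗ[ℝ] Comp J :=
  Submodule.mapQ _ _ (resL J) (by
    rw [Submodule.span_le]
    intro x hx
    rw [Set.mem_singleton_iff] at hx
    subst hx
    exact Submodule.mem_comap.mpr (Submodule.subset_span rfl))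

variable [NeZero n]

/-- The compactified apartment `Λ̄ = ⋃_{∅≠I⊆{1,…,n}} Λ_I` as a set. -/
def CApt (n : ℕ) : Type := Σ I : {I : Finset (Fin n) // I.Nonempty}, Comp I.1

/-- The embedding `Λ ↪ Λ̄`. -/
def emb (z : Apt n) : CApt n := ⟨⟨Finset.univ, Finset.univ_nonempty⟩, z⟩

/-- The point of the boundary component `Λ_I` inside `Λ̄`. -/
def embC (I : Finset (Fin n)) (hI : I.Nonempty) (y : Comp I) : CApt n := ⟨⟨I, hI⟩, y⟩

/-- The cone `D_I = Σ_{i∉I} ℝ_{≥0}(−η_i) ⊆ Λ`. -/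
noncomputable def cone (I : Finset (Fin n)) : Set (Apt n) :=
  (mkC _) '' {x | (∀ l : ↥(Finset.univ : Finset (Fin n)), (l : Fin n) ∈ I → x l = 0) ∧
    ∀ l : ↥(Finset.univ : Finset (Fin n)), (l : Fin n) ∉ I → x l ≤ 0}

/-- The basic open set `C_U^I = ⋃_{I ⊆ J} r_J(U + D_I) ⊆ Λ̄`. -/
noncomputable def CUI (U : Set (Apt n)) (I : Finset (Fin n)) : Set (CApt n) :=
  {p | I ⊆ p.1.1 ∧ p.2 ∈ resQ p.1.1 '' (U + cone I)}

/-- Boundedness for subsets of the apartment `Λ`. -/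
def BoundedA (U : Set (Apt n)) : Prop :=
  ∃ t : Set (↥(Finset.univ : Finset (Fin n)) → ℝ),
    Bornology.IsBounded t ∧ U ⊆ (mkC _) '' t

/-- The topology of `Λ̄`: generated by the open subsets of `Λ` together with the
sets `C_U^I` for nonempty proper `I` and bounded open `U ⊆ Λ`. -/
noncomputable instance : TopologicalSpace (CApt n) :=
  TopologicalSpace.generateFrom
    ({s | ∃ U : Set (Apt n), IsOpen U ∧ s = emb '' U} ∪
     {s | ∃ (U : Set (Apt n)) (I : Finset (Fin n)), I.Nonempty ∧ I ≠ Finset.univ ∧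
        IsOpen U ∧ BoundedA U ∧ s = CUI U I})

/-- The root `a_{ij} = χ_i − χ_j` as a linear functional on `Λ`. -/
noncomputable def aFun (i j : Fin n) : Apt n →ₗ[ℝ] ℝ :=
  Submodule.liftQ _
    (LinearMap.proj (⟨i, Finset.mem_univ i⟩ : ↥(Finset.univ : Finset (Fin n))) -
      LinearMap.proj ⟨j, Finset.mem_univ j⟩) (by
    rw [Submodule.span_le]
    intro x hx
    rw [Set.mem_singleton_iff] at hx
    subst hx
    simp [LinearMap.mem_ker])

/-- The root `b_{ij}` of the component `Λ_I` (for `i, j ∈ I`). -/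
noncomputable def bFun (I : Finset (Fin n)) (i j : ↥I) : Comp I →ₗ[ℝ] ℝ :=
  Submodule.liftQ _
    (LinearMap.proj (R := ℝ) (φ := fun _ : ↥I => ℝ) i -
      LinearMap.proj (R := ℝ) (φ := fun _ : ↥I => ℝ) j) (by
    rw [Submodule.span_le]
    intro x hx
    rw [Set.mem_singleton_iff] at hx
    subst hx
    simp [LinearMap.mem_ker])

/-- The closure in `Λ̄` of the half-space `{ z ∈ Λ : a_{ij}(z) ≥ s }`. -/
noncomputable def halfCl (i j : Fin n) (s : ℝ) : Set (CApt n) :=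
  closure (emb '' {z : Apt n | s ≤ aFun i j z})

/-- `f_Ω(a) = inf{ t : Ω ⊆ closure{ z ∈ Λ : a(z) ≥ −t } } ∈ ℝ ∪ {±∞}`,
for `a = a_{ij}` (with `inf ∅ = +∞`). -/
noncomputable def fO (Ω : Set (CApt n)) (i j : Fin n) : EReal :=
  sInf {t : EReal | ∃ s : ℝ, t = (s : EReal) ∧ Ω ⊆ halfCl i j (-s)}

abbrev VT (n : ℕ) : Type := (↥(Finset.univ : Finset (Fin n)) → ℝ)

set_option linter.unusedSectionVars false

section Helpers

variable [NeZero n]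



/-- coordinate inclusion -/
def co (i : Fin n) : ↥(Finset.univ : Finset (Fin n)) := ⟨i, Finset.mem_univ i⟩

lemma mkC_surjective (I : Finset (Fin n)) : Function.Surjective (mkC I) :=
  Submodule.mkQ_surjective _

lemma mkC_eq_iff {I : Finset (Fin n)} (u v : ↥I → ℝ) :
    mkC I u = mkC I v ↔ ∃ c : ℝ, u = v + c • (1 : ↥I → ℝ) := by
  rw [mkC, Submodule.mkQ_apply, Submodule.mkQ_apply, Submodule.Quotient.eq,
    Submodule.mem_span_singleton]
  constructor
  · rintro ⟨c, hc⟩; exact ⟨c, by rw [show v + c • (1 : ↥I → ℝ) = v + (u - v) from by rw [← hc]]; abel⟩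
  · rintro ⟨c, rfl⟩; exact ⟨c, by abel⟩

lemma isOpenMap_mkC (I : Finset (Fin n)) : IsOpenMap (mkC I) := by
  intro S hS
  have hq : IsQuotientMap (fun v : ↥I → ℝ => mkC I v) := isQuotientMap_quotient_mk'
  rw [show (mkC I) '' S = (fun v : ↥I → ℝ => mkC I v) '' S from rfl, ← hq.isOpen_preimage]
  have : (fun v : ↥I → ℝ => mkC I v) ⁻¹' ((fun v : ↥I → ℝ => mkC I v) '' S) =
      ⋃ c : ℝ, (fun v => v + c • (1 : ↥I → ℝ)) ⁻¹' S := by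
    ext v
    simp only [Set.mem_preimage, Set.mem_image, Set.mem_iUnion]
    constructor
    · rintro ⟨u, hu, he⟩
      obtain ⟨c, hc⟩ := (mkC_eq_iff u v).mp he
      exact ⟨c, by rwa [← hc]⟩
    · rintro ⟨c, hc⟩
      exact ⟨v + c • 1, hc, (mkC_eq_iff _ _).mpr ⟨c, rfl⟩⟩
  rw [this]
  exact isOpen_iUnion fun c =>
    hS.preimage (by continuity)

lemma resQ_mkC (J : Finset (Fin n)) (v : VT n) :
    resQ J (mkC _ v) = mkC J (resL J v) := by
  simp [resQ, mkC, Submodule.mapQ_apply]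

lemma resQ_univ (x : Apt n) : resQ Finset.univ x = x := by
  obtain ⟨v, rfl⟩ := mkC_surjective _ x
  rw [resQ_mkC]
  rfl

lemma aFun_mkC (i j : Fin n) (v : VT n) :
    aFun i j (mkC _ v) = v (co i) - v (co j) := by
  simp [aFun, mkC, co]

lemma mem_cone {J : Finset (Fin n)} {v : VT n}
    (h1 : ∀ l : ↥(Finset.univ : Finset (Fin n)), (l : Fin n) ∈ J → v l = 0)
    (h2 : ∀ l : ↥(Finset.univ : Finset (Fin n)), (l : Fin n) ∉ J → v l ≤ 0) :
    mkC _ v ∈ cone J := ⟨v, ⟨h1, h2⟩, rfl⟩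

lemma cone_zero (J : Finset (Fin n)) : (0 : Apt n) ∈ cone J :=
  ⟨0, ⟨fun _ _ => rfl, fun _ _ => le_refl _⟩, map_zero _⟩

lemma cone_add {J : Finset (Fin n)} {d d' : Apt n} (hd : d ∈ cone J) (hd' : d' ∈ cone J) :
    d + d' ∈ cone J := by
  obtain ⟨v, ⟨hv1, hv2⟩, rfl⟩ := hd
  obtain ⟨v', ⟨h1, h2⟩, rfl⟩ := hd'
  exact ⟨v + v', ⟨fun l hl => by simp [Pi.add_apply, hv1 l hl, h1 l hl],
    fun l hl => add_nonpos (hv2 l hl) (h2 l hl)⟩, map_add _ _ _⟩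

lemma emb_injective : Function.Injective (emb (n := n)) := by
  intro a b h
  have h2 : HEq (emb a).2 (emb b).2 := by rw [h]
  exact eq_of_heq h2

lemma emb_mem_CUI {U : Set (Apt n)} {J : Finset (Fin n)} {z : Apt n} :
    emb z ∈ CUI U J ↔ z ∈ U + cone J := by
  constructor
  · rintro ⟨-, w, hw, he⟩
    have he' : resQ Finset.univ w = z := he
    rw [resQ_univ] at he'
    exact he' ▸ hw
  · intro h
    exact ⟨Finset.subset_univ _, z, h, resQ_univ z⟩

/-- the generating set of the topology -/
def gens (n : ℕ) [NeZero n] : Set (Set (CApt n)) :=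
  {s | ∃ U : Set (Apt n), IsOpen U ∧ s = emb '' U} ∪
    {s | ∃ (U : Set (Apt n)) (I : Finset (Fin n)), I.Nonempty ∧ I ≠ Finset.univ ∧
      IsOpen U ∧ BoundedA U ∧ s = CUI U I}

lemma topo_eq :
    (inferInstance : TopologicalSpace (CApt n)) = TopologicalSpace.generateFrom (gens n) := rfl

lemma isOpen_gen {s : Set (CApt n)} (hs : s ∈ gens n) : IsOpen s :=
  TopologicalSpace.isOpen_generateFrom_of_mem hs

end Helpers
section StepA

variable [NeZero n]

/-- Probing a boundary point's neighborhood `C_U^I` (with `U` a ball around the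
lift with off-`I` coordinates `-R`) against the half-space closure. -/
lemma halfCl_probe {I : Finset (Fin n)} (hI : I.Nonempty) (hIu : I ≠ Finset.univ)
    (g : ↥I → ℝ) {i j : Fin n} {sp : ℝ}
    (hcl : (⟨⟨I, hI⟩, mkC I g⟩ : CApt n) ∈ halfCl i j sp) (R ε : ℝ) (hε : 0 < ε) :
    ∃ u δ : VT n,
      (∀ l : ↥(Finset.univ : Finset (Fin n)),
        |u l - (if h : (l : Fin n) ∈ I then g ⟨(l : Fin n), h⟩ else -R)| < ε) ∧
      (∀ l : ↥(Finset.univ : Finset (Fin n)), (l : Fin n) ∈ I → δ l = 0) ∧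
      (∀ l : ↥(Finset.univ : Finset (Fin n)), (l : Fin n) ∉ I → δ l ≤ 0) ∧
      sp ≤ (u (co i) + δ (co i)) - (u (co j) + δ (co j)) := by
  set w : VT n := fun l => if h : (l : Fin n) ∈ I then g ⟨(l : Fin n), h⟩ else -R with hw
  set U : Set (Apt n) := mkC _ '' Metric.ball w ε with hU
  have hUo : IsOpen U := isOpenMap_mkC _ _ Metric.isOpen_ball
  have hUb : BoundedA U := ⟨_, Metric.isBounded_ball, subset_rfl⟩
  have hopen : IsOpen (CUI U I) := isOpen_gen (Or.inr ⟨U, I, hI, hIu, hUo, hUb, rfl⟩)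
  have hxC : (⟨⟨I, hI⟩, mkC I g⟩ : CApt n) ∈ CUI U I := by
    refine ⟨subset_rfl, mkC _ w,
      ⟨mkC _ w, ⟨w, Metric.mem_ball_self hε, rfl⟩, 0, cone_zero I, add_zero _⟩, ?_⟩
    show resQ I (mkC _ w) = mkC I g
    rw [resQ_mkC]
    congr 1
    funext l
    show w ⟨(l : Fin n), Finset.mem_univ _⟩ = g l
    simp only [hw]
    rw [dif_pos l.2]
  rw [halfCl] at hcl
  replace hcl := (@mem_closure_iff (CApt n) _ _ _).mp hcl
  obtain ⟨q, hq1, hq2⟩ := hcl _ hopen hxC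
  obtain ⟨z, hz, rfl⟩ := hq2
  have hz2 : z ∈ U + cone I := emb_mem_CUI.mp hq1
  obtain ⟨a, ha, b, hb, hab⟩ := Set.mem_add.mp hz2
  obtain ⟨u, hu, rfl⟩ := ha
  obtain ⟨δ, ⟨hδ1, hδ2⟩, rfl⟩ := hb
  refine ⟨u, δ, ?_, hδ1, hδ2, ?_⟩
  · intro l
    have h1 : dist (u l) (w l) ≤ dist u w := dist_le_pi_dist u w l
    have h2 : dist u w < ε := Metric.mem_ball.mp hu
    rw [Real.dist_eq] at h1
    exact lt_of_le_of_lt h1 h2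
  · have hzz : z = mkC _ (u + δ) := by rw [← hab, map_add]
    have : sp ≤ aFun i j z := hz
    rw [hzz, aFun_mkC] at this
    simpa using this

lemma constraint_A1 {I : Finset (Fin n)} (hI : I.Nonempty) (hIu : I ≠ Finset.univ)
    (g : ↥I → ℝ) {i j : Fin n} {sp : ℝ}
    (hcl : (⟨⟨I, hI⟩, mkC I g⟩ : CApt n) ∈ halfCl i j sp) (hj : j ∈ I) : i ∈ I := by
  by_contra hi
  set R : ℝ := 3 - g ⟨j, hj⟩ - sp with hR
  obtain ⟨u, δ, hball, hδ1, hδ2, hsp⟩ := halfCl_probe hI hIu g hcl R 1 one_pos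
  have hbi : |u (co i) - (if h : i ∈ I then g ⟨i, h⟩ else -R)| < 1 := hball (co i)
  have hbj : |u (co j) - (if h : j ∈ I then g ⟨j, h⟩ else -R)| < 1 := hball (co j)
  rw [dif_neg hi] at hbi
  rw [dif_pos hj] at hbj
  have hdi := hδ2 (co i) hi
  have hdj := hδ1 (co j) hj
  rw [abs_lt] at hbi hbj
  rw [hdj] at hsp
  simp only [hR] at hbi
  linarith [hsp, hbi.2, hbj.1, hdi]

lemma constraint_A2 {I : Finset (Fin n)} (hI : I.Nonempty) (hIu : I ≠ Finset.univ)
    (g : ↥I → ℝ) {i j : Fin n} {sp : ℝ}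
    (hcl : (⟨⟨I, hI⟩, mkC I g⟩ : CApt n) ∈ halfCl i j sp) (hi : i ∈ I) (hj : j ∈ I) :
    sp ≤ g ⟨i, hi⟩ - g ⟨j, hj⟩ := by
  by_contra hlt
  push_neg at hlt
  set ε : ℝ := (sp - (g ⟨i, hi⟩ - g ⟨j, hj⟩)) / 2 with hε
  have hεpos : 0 < ε := by rw [hε]; linarith
  obtain ⟨u, δ, hball, hδ1, hδ2, hsp⟩ := halfCl_probe hI hIu g hcl 0 ε hεpos
  have hbi : |u (co i) - (if h : i ∈ I then g ⟨i, h⟩ else -(0:ℝ))| < ε := hball (co i)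
  have hbj : |u (co j) - (if h : j ∈ I then g ⟨j, h⟩ else -(0:ℝ))| < ε := hball (co j)
  rw [dif_pos hi] at hbi
  rw [dif_pos hj] at hbj
  have hdi := hδ1 (co i) hi
  have hdj := hδ1 (co j) hj
  rw [abs_lt] at hbi hbj
  rw [hdi, hdj] at hsp
  simp only [hε] at hbi hbj
  linarith [hbi.2, hbj.1, hsp]

end StepA

/-- Let `Φ⁺` be the positive system of the `A_{n−1}` root system given by a
linear order `≺` on `{1,…,n}` (encoded by a permutation `e`, with `i ≺ j` iff
`e⁻¹(i) < e⁻¹(j)`, and `a_{ij} ∈ Φ⁺` iff `i ≺ j`), let `Ψ ⊆ Φ⁺` and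
`s_a ∈ ℝ` for `a ∈ Ψ`.  Then in the compactified apartment `Λ̄`,
`⋂_{a∈Ψ} cl{ z ∈ Λ : a(z) ≥ s_a } = cl( ⋂_{a∈Ψ} { z ∈ Λ : a(z) ≥ s_a } )`. -/
theorem iInter_halfCl_eq_closure_iInter {n : ℕ} [NeZero n]
    (e : Equiv.Perm (Fin n)) (Ψ : Finset (Fin n × Fin n))
    (hΨ : ∀ p ∈ Ψ, e.symm p.1 < e.symm p.2)
    (s : Fin n × Fin n → ℝ) :
    (⋂ p ∈ Ψ, halfCl p.1 p.2 (s p)) =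
      closure (emb '' ⋂ p ∈ Ψ, {z : Apt n | s p ≤ aFun p.1 p.2 z}) := by
  apply Set.Subset.antisymm
  · intro x hx
    simp only [Set.mem_iInter] at hx
    obtain ⟨⟨I, hI⟩, y⟩ := x
    by_cases hIu : I = Finset.univ
    · -- interior case
      subst hIu
      obtain ⟨v₀, rfl⟩ := mkC_surjective _ y
      have key : ∀ p ∈ Ψ, s p ≤ aFun p.1 p.2 (mkC _ v₀) := by
        intro p hp
        by_contra hlt
        push_neg at hlt
        rw [aFun_mkC] at hlt
        set W' : Set (VT n) := {v | v (co p.1) - v (co p.2) < s p} with hW'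
        have hW'o : IsOpen W' := by
          have hcont : Continuous fun v : VT n => v (co p.1) - v (co p.2) :=
            (continuous_apply _).sub (continuous_apply _)
          exact isOpen_lt hcont continuous_const
        have hUo : IsOpen (mkC _ '' W') := isOpenMap_mkC _ _ hW'o
        have hopen : IsOpen (emb '' (mkC _ '' W')) := isOpen_gen (Or.inl ⟨_, hUo, rfl⟩)
        have hxW : (⟨⟨Finset.univ, hI⟩, mkC _ v₀⟩ : CApt n) ∈ emb '' (mkC _ '' W') :=
          ⟨mkC _ v₀, ⟨v₀, hlt, rfl⟩, rfl⟩
        have hcl2 := hx p hp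
        rw [halfCl] at hcl2
        replace hcl2 := (@mem_closure_iff (CApt n) _ _ _).mp hcl2
        obtain ⟨q, hq1, hq2⟩ := hcl2 _ hopen hxW
        obtain ⟨z1, hz1, he1⟩ := hq1
        obtain ⟨z2, hz2, he2⟩ := hq2
        have hz12 : z1 = z2 := emb_injective (he1.trans he2.symm)
        subst hz12
        obtain ⟨u, hu, rfl⟩ := hz1
        rw [Set.mem_setOf_eq, aFun_mkC] at hz2
        exact absurd hz2 (not_le.mpr hu)
      exact subset_closure ⟨mkC _ v₀, Set.mem_iInter₂.mpr key, rfl⟩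
    · -- boundary case
      obtain ⟨g, rfl⟩ := mkC_surjective I y
      have hx' : ∀ p ∈ Ψ, (⟨⟨I, hI⟩, mkC I g⟩ : CApt n) ∈ halfCl p.1 p.2 (s p) := hx
      have hA1 : ∀ p ∈ Ψ, p.2 ∈ I → p.1 ∈ I := fun p hp hj =>
        constraint_A1 hI hIu g (hx' p hp) hj
      have hA2 : ∀ p ∈ Ψ, ∀ (h1 : p.1 ∈ I) (h2 : p.2 ∈ I),
          s p ≤ g ⟨p.1, h1⟩ - g ⟨p.2, h2⟩ :=
        fun p hp h1 h2 => constraint_A2 hI hIu g (hx' p hp) h1 h2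
      have hbasis := TopologicalSpace.isTopologicalBasis_of_subbasis (topo_eq (n := n))
      apply hbasis.mem_closure_iff.mpr
      rintro o ⟨F, ⟨hFfin, hFsub⟩, rfl⟩ hxo
      -- extract data from each basic generator containing x
      have hdata : ∀ G ∈ F, ∃ (U : Set (Apt n)) (J : Finset (Fin n)) (v : VT n) (c : ℝ),
          J ⊆ I ∧ mkC _ v ∈ U + cone J ∧
          (∀ l : ↥I, v ⟨(l : Fin n), Finset.mem_univ _⟩ = g l + c) ∧ G = CUI U J := by
        intro G hG
        have hxG : (⟨⟨I, hI⟩, mkC I g⟩ : CApt n) ∈ G := (Set.mem_sInter.mp hxo) G hG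
        rcases hFsub hG with ⟨U, hUo, rfl⟩ | ⟨U, J, hJne, hJu, hUo, hUb, rfl⟩
        · exfalso
          obtain ⟨z, hz, he⟩ := hxG
          exact hIu (congrArg (fun q : CApt n => q.1.1) he).symm
        · obtain ⟨hJI, zz, hzz, hres⟩ := hxG
          obtain ⟨v, rfl⟩ := mkC_surjective _ zz
          rw [resQ_mkC] at hres
          obtain ⟨c, hc⟩ := (mkC_eq_iff _ _).mp hres
          refine ⟨U, J, v, c, hJI, hzz, ?_, rfl⟩
          intro l
          have h := congrFun hc l
          simpa [resL, LinearMap.funLeft_apply] using h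
      have hdata' : ∀ G : {G // G ∈ F}, ∃ (U : Set (Apt n)) (J : Finset (Fin n))
          (v : VT n) (c : ℝ), J ⊆ I ∧ mkC _ v ∈ U + cone J ∧
          (∀ l : ↥I, v ⟨(l : Fin n), Finset.mem_univ _⟩ = g l + c) ∧ G.1 = CUI U J :=
        fun G => hdata G.1 G.2
      choose U J v c hJI hmem hvc hGeq using hdata'
      haveI : Finite {G // G ∈ F} := hFfin.to_subtype
      obtain ⟨R, hR⟩ : ∃ R : ℝ, ∀ (G : {G // G ∈ F})
          (l : ↥(Finset.univ : Finset (Fin n))), c G - v G l ≤ R := by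
        obtain ⟨R, hR⟩ := (Set.finite_range fun q : {G // G ∈ F} ×
          ↥(Finset.univ : Finset (Fin n)) => c q.1 - v q.1 q.2).bddAbove
        exact ⟨R, fun G l => hR (Set.mem_range_self (G, l))⟩
      obtain ⟨T', hT'⟩ : ∃ T' : ℝ, ∀ p : {p // p ∈ Ψ},
          max (s p.1) (s p.1 - (if h : (p.1).1 ∈ I then g ⟨(p.1).1, h⟩ else 0) - R) ≤ T' := by
        obtain ⟨T', hT'⟩ := (Set.finite_range fun p : {p // p ∈ Ψ} =>
          max (s p.1) (s p.1 - (if h : (p.1).1 ∈ I then g ⟨(p.1).1, h⟩ else 0) - R)).bddAbove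
        exact ⟨T', fun p => hT' (Set.mem_range_self p)⟩
      set T : ℝ := max 0 T' with hT
      have hT0 : (0:ℝ) ≤ T := le_max_left _ _
      have hTT' : T' ≤ T := le_max_right _ _
      set zv : VT n := fun l => if h : (l : Fin n) ∈ I then g ⟨(l : Fin n), h⟩
          else -(R + T * (((e.symm (l : Fin n) : ℕ) : ℝ) + 1)) with hzv
      -- Claim 1 : the perturbed lift lies in all the sets U_G + cone J_G
      have hclaim1 : ∀ G : {G // G ∈ F}, mkC _ zv ∈ U G + cone (J G) := by
        intro G
        obtain ⟨a, ha, b, hb, hab⟩ := Set.mem_add.mp (hmem G)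
        have hδ : mkC _ (zv + c G • (1 : VT n) - v G) ∈ cone (J G) := by
          apply mem_cone
          · intro l hl
            have hlI : (l : Fin n) ∈ I := hJI G hl
            have hveq : v G l = g ⟨(l : Fin n), hlI⟩ + c G := hvc G ⟨(l : Fin n), hlI⟩
            have hzl : zv l = g ⟨(l : Fin n), hlI⟩ := by
              simp only [hzv]; rw [dif_pos hlI]
            simp [Pi.sub_apply, Pi.add_apply, Pi.smul_apply, Pi.one_apply, smul_eq_mul,
              mul_one, hzl, hveq]
          · intro l hl
            by_cases hlI : (l : Fin n) ∈ I
            · have hveq : v G l = g ⟨(l : Fin n), hlI⟩ + c G := hvc G ⟨(l : Fin n), hlI⟩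
              have hzl : zv l = g ⟨(l : Fin n), hlI⟩ := by
                simp only [hzv]; rw [dif_pos hlI]
              simp [Pi.sub_apply, Pi.add_apply, Pi.smul_apply, Pi.one_apply, smul_eq_mul,
                mul_one, hzl, hveq]
            · have hcv := hR G l
              have h1 : (0:ℝ) ≤ T * (((e.symm (l : Fin n) : ℕ) : ℝ) + 1) :=
                mul_nonneg hT0 (by positivity)
              have hzl : zv l = -(R + T * (((e.symm (l : Fin n) : ℕ) : ℝ) + 1)) := by
                simp only [hzv]; rw [dif_neg hlI]
              simp only [Pi.sub_apply, Pi.add_apply, Pi.smul_apply, Pi.one_apply,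
                smul_eq_mul, mul_one, hzl]
              linarith
        have hkey : mkC _ zv = mkC _ (v G) + mkC _ (zv + c G • (1 : VT n) - v G) := by
          rw [← map_add]
          apply (mkC_eq_iff _ _).mpr
          refine ⟨-(c G), ?_⟩
          rw [neg_smul]
          abel
        refine Set.mem_add.mpr ⟨a, ha, b + mkC _ (zv + c G • (1 : VT n) - v G),
          cone_add hb hδ, ?_⟩
        rw [← add_assoc, hab]
        exact hkey.symm
      -- Claim 2 : the perturbed lift satisfies all the inequalities
      have hclaim2 : ∀ p ∈ Ψ, s p ≤ aFun p.1 p.2 (mkC _ zv) := by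
        intro p hp
        rw [aFun_mkC]
        have hord : ((e.symm p.1 : ℕ) : ℝ) + 1 ≤ ((e.symm p.2 : ℕ) : ℝ) := by
          have := hΨ p hp
          have h2 : (e.symm p.1 : ℕ) + 1 ≤ (e.symm p.2 : ℕ) := this
          exact_mod_cast h2
        have hsT : s p ≤ T := le_trans (le_trans (le_max_left _ _) (hT' ⟨p, hp⟩)) hTT'
        by_cases h2 : p.2 ∈ I
        · have h1 : p.1 ∈ I := hA1 p hp h2
          have ei : zv (co p.1) = g ⟨p.1, h1⟩ := by
            show (if h : p.1 ∈ I then g ⟨p.1, h⟩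
              else -(R + T * (((e.symm p.1 : ℕ) : ℝ) + 1))) = _
            rw [dif_pos h1]
          have ej : zv (co p.2) = g ⟨p.2, h2⟩ := by
            show (if h : p.2 ∈ I then g ⟨p.2, h⟩
              else -(R + T * (((e.symm p.2 : ℕ) : ℝ) + 1))) = _
            rw [dif_pos h2]
          rw [ei, ej]
          exact hA2 p hp h1 h2
        · have hTj : T ≤ T * (((e.symm p.2 : ℕ) : ℝ) + 1) :=
            le_mul_of_one_le_right hT0
              (by have := Nat.cast_nonneg (α := ℝ) (e.symm p.2 : ℕ); linarith)
          have ej : zv (co p.2) = -(R + T * (((e.symm p.2 : ℕ) : ℝ) + 1)) := by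
            show (if h : p.2 ∈ I then g ⟨p.2, h⟩
              else -(R + T * (((e.symm p.2 : ℕ) : ℝ) + 1))) = _
            rw [dif_neg h2]
          by_cases h1 : p.1 ∈ I
          · have ei : zv (co p.1) = g ⟨p.1, h1⟩ := by
              show (if h : p.1 ∈ I then g ⟨p.1, h⟩
                else -(R + T * (((e.symm p.1 : ℕ) : ℝ) + 1))) = _
              rw [dif_pos h1]
            have hb2 : s p - (if h : p.1 ∈ I then g ⟨p.1, h⟩ else 0) - R ≤ T' :=
              le_trans (le_max_right _ _) (hT' ⟨p, hp⟩)
            rw [dif_pos h1] at hb2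
            rw [ei, ej]
            linarith
          · have ei : zv (co p.1) = -(R + T * (((e.symm p.1 : ℕ) : ℝ) + 1)) := by
              show (if h : p.1 ∈ I then g ⟨p.1, h⟩
                else -(R + T * (((e.symm p.1 : ℕ) : ℝ) + 1))) = _
              rw [dif_neg h1]
            have hmul : T * 1 ≤ T * (((e.symm p.2 : ℕ) : ℝ) + 1 -
                (((e.symm p.1 : ℕ) : ℝ) + 1)) :=
              mul_le_mul_of_nonneg_left (by linarith) hT0
            rw [mul_sub, mul_one] at hmul
            rw [ei, ej]
            linarith
      refine ⟨emb (mkC _ zv), Set.mem_sInter.mpr fun G hG => ?_,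
        ⟨mkC _ zv, Set.mem_iInter₂.mpr hclaim2, rfl⟩⟩
      have hGe : G = CUI (U ⟨G, hG⟩) (J ⟨G, hG⟩) := hGeq ⟨G, hG⟩
      rw [hGe]
      exact emb_mem_CUI.mpr (hclaim1 ⟨G, hG⟩)
  · refine Set.subset_iInter₂ fun p hp => ?_
    exact closure_mono (Set.image_mono (Set.biInter_subset_of_mem hp))

end CompApp
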